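/- Let T ⊆ ℕ^{<ℕ} be a tree with at least one infinite path, with leftmost path x. Let L = {σ ∈ T : for all τ ≤_lex σ in T, either T_τ has no infinite path or τ ⊑ σ}, ordered by the Kleene–Brouwer order. Then every element of L that is not a prefix of x lies in the well-founded part of L, and consequently every infinite strictly KB-descending sequence in L contains prefixes of x of arbitrarily large length. -/

import Mathlib

/-- A tree on ℕ: a set of finite sequences closed under prefixes. -/
def IsTree (T : Set (List ℕ)) : Prop := ∀ σ ∈ T, ∀ τ : List ℕ, τ <+: σ → τ ∈ T

/-- σ is lexicographically less than τ at the first place where they differ. -/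
def LexLt (σ τ : List ℕ) : Prop :=
  ∃ i : ℕ, (∀ j < i, σ[j]? = τ[j]?) ∧ ∃ a b : ℕ, σ[i]? = some a ∧ τ[i]? = some b ∧ a < b

/-- The Kleene–Brouwer order: σ ≤ τ iff τ is a prefix of σ, or σ <_lex τ. -/
def KBle (σ τ : List ℕ) : Prop := τ <+: σ ∨ LexLt σ τ

/-- Strict Kleene–Brouwer order. -/
def KBlt (σ τ : List ℕ) : Prop := KBle σ τ ∧ σ ≠ τ

/-- x is an infinite path through T. -/
def IsPath (T : Set (List ℕ)) (x : ℕ → ℕ) : Prop := ∀ k : ℕ, (List.range k).map x ∈ T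

/-- T_σ : the elements of T comparable with σ under the prefix relation. -/
def Tsub (T : Set (List ℕ)) (σ : List ℕ) : Set (List ℕ) := {τ ∈ T | τ <+: σ ∨ σ <+: τ}

/-- x is the leftmost path of T. -/
def IsLeftmostPath (T : Set (List ℕ)) (x : ℕ → ℕ) : Prop :=
  IsPath T x ∧ ∀ y : ℕ → ℕ, IsPath T y →
    x = y ∨ ∃ i : ℕ, x i < y i ∧ ∀ j < i, x j = y j

/-- τ is lexicographically below-or-prefix-comparable-below σ. -/
def LexBelow (τ σ : List ℕ) : Prop := LexLt τ σ ∨ τ <+: σ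

/-!
An element of `L` never lies lexicographically to the right of the leftmost path `x`: every
initial segment of `x` has the path `x` through it, so it would have to be a prefix of that element.
Along an infinite KB-descending sequence every coordinate eventually stabilises, and the limit is a
path through `T`; it lies weakly left of `x` by the invariant, hence is `x`. A term that is not a
prefix of `x` lies strictly left of `x`, so it is KB-below every later term extending a longer
initial segment of `x`, contradicting descent. The first claim follows from the second, since a
descending sequence starting at `σ` reaches a prefix of `x` longer than `σ`.
-/

theorem List.IsPrefix.getElem?_eq {α : Type*} {l₁ l₂ : List α} (h : l₁ <+: l₂) {i : ℕ}
    (hi : i < l₁.length) : l₂[i]? = l₁[i]? :=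
  (List.prefix_iff_getElem?.1 h i hi).trans (List.getElem?_eq_getElem hi).symm

section PiLex

variable {α : Type*}

theorem Pi.toLex_lt_toLex_iff [LT α] {x y : ℕ → α} :
    toLex x < toLex y ↔ ∃ i, (∀ j < i, x j = y j) ∧ x i < y i := Iff.rfl

variable [LinearOrder α] [WellFoundedLT α]

theorem Pi.exists_eqOn_Iio_of_antitone_toLex {g : ℕ → ℕ → α}
    (hg : Antitone fun n => toLex (g n)) (k : ℕ) :
    ∃ N, ∀ n, N ≤ n → ∀ j < k, g n j = g N j := by
  induction k with
  | zero => exact ⟨0, fun _ _ _ hj => absurd hj (Nat.not_lt_zero _)⟩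
  | succ k ih =>
    obtain ⟨N, hN⟩ := ih
    have hanti : Antitone fun n => g (N + n) k := fun m n hmn =>
      Pi.apply_le_of_toLex (hg (by omega)) fun j hj =>
        (hN _ (by omega) j hj).trans (hN _ (by omega) j hj).symm
    obtain ⟨m, hm⟩ := WellFoundedLT.antitone_chain_condition hanti
    refine ⟨N + m, fun n hn j hj => ?_⟩
    obtain hj | rfl := Nat.lt_succ_iff_lt_or_eq.1 hj
    · exact (hN n (by omega) j hj).trans (hN _ (by omega) j hj).symm
    · simpa [Nat.add_sub_cancel' (by omega : N ≤ n)] using (hm (n - N) (by omega)).symm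

theorem Pi.exists_limit_of_antitone_toLex {g : ℕ → ℕ → α}
    (hg : Antitone fun n => toLex (g n)) :
    ∃ w : ℕ → α, ∀ k, ∃ N, ∀ n, N ≤ n → ∀ j < k, g n j = w j := by
  choose N hN using Pi.exists_eqOn_Iio_of_antitone_toLex hg
  refine ⟨fun j => g (N (j + 1)) j, fun k => ⟨N k, fun n hn j hj => ?_⟩⟩
  have h₁ := hN k (max n (N (j + 1))) (le_max_of_le_left hn) j hj
  have h₂ := hN (j + 1) (max n (N (j + 1))) (le_max_right _ _) j j.lt_succ_self
  exact (hN k n hn j hj).trans (h₁.symm.trans h₂)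

end PiLex

section KleeneBrouwer

variable {σ τ τ' : List ℕ} {i : ℕ}

/-- A string padded with `⊤`: the Kleene–Brouwer order is the lexicographic order on keys. -/
def kbKey (σ : List ℕ) (i : ℕ) : ℕ∞ := σ[i]?.elim ⊤ (↑)

theorem kbKey_eq_top_iff : kbKey σ i = ⊤ ↔ σ.length ≤ i := by
  rw [← List.getElem?_eq_none_iff]
  unfold kbKey
  rcases σ[i]? with _ | a <;> simp

theorem kbKey_eq_coe_iff {a : ℕ} : kbKey σ i = a ↔ σ[i]? = some a := by
  unfold kbKey
  rcases σ[i]? with _ | b <;> simp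

theorem kbKey_eq_kbKey_iff : kbKey σ i = kbKey τ i ↔ σ[i]? = τ[i]? := by
  unfold kbKey
  rcases σ[i]? with _ | a <;> rcases τ[i]? with _ | b <;> simp

theorem kbKey_injective : Function.Injective kbKey := fun _ _ h =>
  List.ext_getElem? fun i => kbKey_eq_kbKey_iff.1 (congrFun h i)

theorem kBlt_iff_kbKey_lt : KBlt σ τ ↔ toLex (kbKey σ) < toLex (kbKey τ) := by
  constructor
  · rintro ⟨hpre | ⟨i, hi, a, b, ha, hb, hab⟩, hne⟩
    · have hlt : τ.length < σ.length :=
        lt_of_not_ge fun h => hne (hpre.eq_of_length_le h).symm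
      refine Pi.toLex_lt_toLex_iff.2
        ⟨τ.length, fun j hj => kbKey_eq_kbKey_iff.2 (hpre.getElem?_eq hj), ?_⟩
      rw [kbKey_eq_top_iff.2 le_rfl]
      exact lt_top_iff_ne_top.2 (mt kbKey_eq_top_iff.1 (not_le.2 hlt))
    · refine Pi.toLex_lt_toLex_iff.2 ⟨i, fun j hj => kbKey_eq_kbKey_iff.2 (hi j hj), ?_⟩
      rw [kbKey_eq_coe_iff.2 ha, kbKey_eq_coe_iff.2 hb]
      exact_mod_cast hab
  · intro h
    refine ⟨?_, by rintro rfl; exact lt_irrefl _ h⟩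
    obtain ⟨i, hi, hlt⟩ := Pi.toLex_lt_toLex_iff.1 h
    rcases hτ : τ[i]? with _ | b
    · refine Or.inl (List.prefix_iff_getElem?.2 fun j hj => ?_)
      have hji : j < i := hj.trans_le (List.getElem?_eq_none_iff.1 hτ)
      rw [kbKey_eq_kbKey_iff.1 (hi j hji), List.getElem?_eq_getElem hj]
    · rw [kbKey_eq_coe_iff.2 hτ] at hlt
      obtain ⟨a, ha⟩ := ENat.ne_top_iff_exists.1 hlt.ne_top
      rw [← ha] at hlt
      exact Or.inr ⟨i, fun j hj => kbKey_eq_kbKey_iff.1 (hi j hj), a, b,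
        kbKey_eq_coe_iff.1 ha.symm, hτ, by exact_mod_cast hlt⟩

theorem LexLt.not_isPrefix (h : LexLt σ τ) : ¬ σ <+: τ := by
  obtain ⟨i, -, a, b, ha, hb, hab⟩ := h
  intro hpre
  rw [hpre.getElem?_eq (List.getElem?_eq_some_iff.1 ha).1, ha, Option.some_inj] at hb
  exact hab.ne hb

theorem LexLt.trans_isPrefix (h : LexLt σ τ) (hτ : τ <+: τ') : LexLt σ τ' := by
  obtain ⟨i, hi, a, b, ha, hb, hab⟩ := h
  have hiτ : i < τ.length := (List.getElem?_eq_some_iff.1 hb).1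
  refine ⟨i, fun j hj => ?_, a, b, ha, hτ.getElem?_eq hiτ ▸ hb, hab⟩
  rw [hi j hj, hτ.getElem?_eq (hj.trans hiτ)]

theorem LexLt.kBlt (h : LexLt σ τ) : KBlt σ τ :=
  ⟨Or.inr h, by rintro rfl; exact h.not_isPrefix List.prefix_rfl⟩

theorem lexLt_or_lexLt_of_not_isPrefix (h₁ : ¬ σ <+: τ) (h₂ : ¬ τ <+: σ) :
    LexLt σ τ ∨ LexLt τ σ := by
  have hne : toLex (kbKey σ) ≠ toLex (kbKey τ) :=
    (toLex.injective.comp kbKey_injective).ne (by rintro rfl; exact h₁ List.prefix_rfl)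
  rcases hne.lt_or_gt with h | h
  · obtain ⟨h | h, -⟩ := kBlt_iff_kbKey_lt.2 h
    exacts [absurd h h₂, Or.inl h]
  · obtain ⟨h | h, -⟩ := kBlt_iff_kbKey_lt.2 h
    exacts [absurd h h₁, Or.inr h]

theorem strictAnti_kbKey {f : ℕ → List ℕ} (hf : ∀ n, KBlt (f (n + 1)) (f n)) :
    StrictAnti fun n => toLex (kbKey (f n)) :=
  strictAnti_nat_of_succ_lt fun n => kBlt_iff_kbKey_lt.1 (hf n)

end KleeneBrouwer

section InitialSegments

variable {x z : ℕ → ℕ} {σ : List ℕ}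

theorem map_range_isPrefix_iff {k : ℕ} :
    (List.range k).map z <+: σ ↔ ∀ j < k, σ[j]? = some (z j) := by
  simp [List.prefix_iff_getElem?]

theorem map_range_isPrefix_map_range (x : ℕ → ℕ) {j k : ℕ} (h : j ≤ k) :
    (List.range j).map x <+: (List.range k).map x := by
  rw [← min_eq_left h, ← List.take_range, List.map_take]
  exact List.take_prefix _ _

theorem eq_map_range_of_isPrefix {k : ℕ} (h : σ <+: (List.range k).map x) :
    σ = (List.range σ.length).map x := by
  have hlen : σ.length ≤ k := by simpa using h.length_le
  rw [List.prefix_iff_eq_take.1 h, ← List.map_take, List.take_range, min_eq_left hlen]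
  simp

theorem lexLt_map_range {i : ℕ} (hlt : x i < z i) (heq : ∀ j < i, x j = z j) :
    LexLt ((List.range (i + 1)).map x) ((List.range (i + 1)).map z) :=
  ⟨i, fun j hj => by simp [hj.trans i.lt_succ_self, heq j hj],
    x i, z i, by simp, by simp, hlt⟩

end InitialSegments

theorem exists_isPrefix_of_kBlt_descending {f : ℕ → List ℕ}
    (hf : ∀ n, KBlt (f (n + 1)) (f n)) :
    ∃ z : ℕ → ℕ, ∀ k, ∃ N, ∀ n, N ≤ n → (List.range k).map z <+: f n := by
  obtain ⟨w, hw⟩ := Pi.exists_limit_of_antitone_toLex (strictAnti_kbKey hf).antitone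
  have hfin : ∀ j, w j ≠ ⊤ := by
    -- otherwise all late terms have length `≤ j`, agree below `j + 1`, and hence coincide
    intro j hj
    obtain ⟨N, hN⟩ := hw (j + 1)
    have hkey : ∀ n, N ≤ n → kbKey (f n) = kbKey (f N) := by
      intro n hn
      have hshort : ∀ m, N ≤ m → (f m).length ≤ j := fun m hm =>
        kbKey_eq_top_iff.1 ((hN m hm j j.lt_succ_self).trans hj)
      funext i
      rcases lt_or_ge i (j + 1) with hi | hi
      · rw [hN n hn i hi, hN N le_rfl i hi]
      · rw [kbKey_eq_top_iff.2 ((hshort n hn).trans (by omega)),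
          kbKey_eq_top_iff.2 ((hshort N le_rfl).trans (by omega))]
    exact (strictAnti_kbKey hf N.lt_succ_self).ne (congrArg toLex (hkey (N + 1) N.le_succ))
  refine ⟨fun j => (w j).toNat, fun k => ?_⟩
  obtain ⟨N, hN⟩ := hw k
  refine ⟨N, fun n hn => map_range_isPrefix_iff.2 fun j hj => kbKey_eq_coe_iff.1 ?_⟩
  rw [hN n hn j hj, ENat.natCast_toNat (hfin j)]

section LeftPart

variable {T : Set (List ℕ)} {x : ℕ → ℕ} {σ τ : List ℕ}

/-- The set `L` of the theorem. -/
def leftPart (T : Set (List ℕ)) : Set (List ℕ) :=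
  {σ ∈ T | ∀ τ ∈ T, LexBelow τ σ →
    (¬ ∃ z : ℕ → ℕ, IsPath (Tsub T τ) z) ∨ τ <+: σ}

theorem IsPath.tsub_map_range (hx : IsPath T x) (l : ℕ) :
    IsPath (Tsub T ((List.range l).map x)) x := fun k =>
  ⟨hx k, (le_total k l).imp (map_range_isPrefix_map_range x) (map_range_isPrefix_map_range x)⟩

theorem not_lexLt_of_mem_leftPart (hx : IsPath T x) (hσ : σ ∈ leftPart T) (k : ℕ) :
    ¬ LexLt ((List.range k).map x) σ := fun h =>
  h.not_isPrefix <|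
    (hσ.2 _ (hx k) (Or.inl h)).resolve_left (not_not.2 ⟨x, hx.tsub_map_range k⟩)

theorem lexLt_of_mem_leftPart (hx : IsPath T x) (hσ : σ ∈ leftPart T)
    (hne : σ ≠ (List.range σ.length).map x) (hτ : (List.range (σ.length + 1)).map x <+: τ) :
    LexLt σ τ := by
  have h₁ : ¬ σ <+: (List.range (σ.length + 1)).map x := fun h =>
    hne (eq_map_range_of_isPrefix h)
  have h₂ : ¬ (List.range (σ.length + 1)).map x <+: σ := fun h => by simpa using h.length_le
  exact ((lexLt_or_lexLt_of_not_isPrefix h₁ h₂).resolve_right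
    (not_lexLt_of_mem_leftPart hx hσ _)).trans_isPrefix hτ

theorem exists_map_range_eq_of_kBlt_descending (hT : IsTree T) (hx : IsLeftmostPath T x)
    {f : ℕ → List ℕ} (hfL : ∀ n, f n ∈ leftPart T) (hf : ∀ n, KBlt (f (n + 1)) (f n))
    (k : ℕ) : ∃ n, k ≤ (f n).length ∧ f n = (List.range (f n).length).map x := by
  obtain ⟨z, hz⟩ := exists_isPrefix_of_kBlt_descending hf
  have hzT : IsPath T z := fun k =>
    let ⟨N, hN⟩ := hz k
    hT _ (hfL N).1 _ (hN N le_rfl)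
  obtain rfl : x = z := (hx.2 z hzT).resolve_right fun ⟨i, hlt, heq⟩ =>
    let ⟨N, hN⟩ := hz (i + 1)
    not_lexLt_of_mem_leftPart hx.1 (hfL N) _
      ((lexLt_map_range hlt heq).trans_isPrefix (hN N le_rfl))
  obtain ⟨N, hN⟩ := hz k
  refine ⟨N, by simpa using (hN N le_rfl).length_le, by_contra fun hne => ?_⟩
  obtain ⟨M, hM⟩ := hz ((f N).length + 1)
  have hlex := lexLt_of_mem_leftPart hx.1 (hfL N) hne (hM (max M (N + 1)) (le_max_left _ _))
  exact (strictAnti_kbKey hf (N.lt_succ_self.trans_le (le_max_right _ _))).asymm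
    (kBlt_iff_kbKey_lt.1 hlex.kBlt)

end LeftPart

/-- In the linear order L of strings of T lexicographically below the leftmost
path x, ordered by Kleene–Brouwer: every element which is not a prefix of x lies
in the well-founded part, and every infinite strictly KB-descending sequence in L
contains prefixes of x of arbitrarily large length. -/
theorem leftmost_path_via_KB (T : Set (List ℕ)) (hT : IsTree T)
    (x : ℕ → ℕ) (hx : IsLeftmostPath T x) :
    let L : Set (List ℕ) := {σ ∈ T | ∀ τ ∈ T, LexBelow τ σ →
      (¬ ∃ z : ℕ → ℕ, IsPath (Tsub T τ) z) ∨ τ <+: σ}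
    (∀ σ ∈ L, σ ≠ (List.range σ.length).map x →
      ¬ ∃ f : ℕ → List ℕ, f 0 = σ ∧ (∀ n, f n ∈ L) ∧ ∀ n, KBlt (f (n+1)) (f n)) ∧
    (∀ f : ℕ → List ℕ, (∀ n, f n ∈ L) → (∀ n, KBlt (f (n+1)) (f n)) →
      ∀ k : ℕ, ∃ n : ℕ, k ≤ (f n).length ∧ f n = (List.range (f n).length).map x) := by
  intro L
  refine ⟨?_, fun f hfL hf => exists_map_range_eq_of_kBlt_descending hT hx hfL hf⟩
  rintro _ hσ hne ⟨f, rfl, hfL, hf⟩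
  obtain ⟨n, hn, hfn⟩ :=
    exists_map_range_eq_of_kBlt_descending hT hx hfL hf ((f 0).length + 1)
  have hn0 : 0 < n := Nat.pos_of_ne_zero fun h => by subst h; omega
  have hpre : (List.range ((f 0).length + 1)).map x <+: f n := by
    rw [hfn]
    exact map_range_isPrefix_map_range x hn
  have hlex : LexLt (f 0) (f n) := lexLt_of_mem_leftPart hx.1 hσ hne hpre
  exact (strictAnti_kbKey hf hn0).asymm (kBlt_iff_kbKey_lt.1 hlex.kBlt)
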